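/- Let m ≥ 1 be an integer, d ≥ 2, and β ≥ 2π√d. Let Γ ⊂ 𝕋^d be a finite set such that Δ_∞(Γ) ≥ β/m and such that no γ ∈ Γ satisfies |γ|_∞ < β/m (i.e., Γ is disjoint from the open ℓ∞-cube of half-side β/m centered at 0). Then Σ_{γ∈Γ} |D_m(γ)|² ≤ 4π²d/β² and Σ_{γ∈Γ} |∇D_m(γ)|² ≤ 16π⁴d²m²/β². -/

import Mathlib

/-!
Cut the torus coordinate `t - round t ∈ [-1/2, 1/2]` into cells of side `δ = β/m`.
The Dirichlet identity `sin (π t) d_m(t) = sin ((2m+1) π t) / (2m+1)` and the bound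
`δ |j| ≤ |sin (π t)|` on the cell `j` control both `d_m(t)²` and `d_m'(t)² / (2π(2m+1))²`
by the weight `w j = 1` for `j = 0` and `((2m+1) δ j)⁻²` otherwise. The separation puts at
most one point of `Γ` in each cell of `ℤ^d` and none in the central one, so both energies
are controlled by the lattice sum `(∑_{j ∈ ℤ} w j)^d - 1 = (1 + π²/(3L²))^d - 1`, which is
at most `2dπ²/(3L²)` for `L = (2m+1)δ ≥ β`.
-/

noncomputable section

open Real

/-- The normalized one-dimensional Dirichlet kernel
`d_m(t) = (2m+1)⁻¹ ∑_{k=-m}^{m} e^{2πikt}`, written via its (equal) real form. -/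
def dirKer (m : ℕ) (t : ℝ) : ℝ :=
  (2 * m + 1 : ℝ)⁻¹ * ∑ k ∈ Finset.Icc (-(m : ℤ)) (m : ℤ), Real.cos (2 * Real.pi * k * t)

/-- The square (tensor-product) Dirichlet kernel `D_m(ξ) = ∏ i d_m(ξ i)` on `ℝ^d`;
it is `ℤ^d`-periodic, hence well-defined on the torus `𝕋^d`. -/
def sqDirKer (d m : ℕ) (ξ : EuclideanSpace ℝ (Fin d)) : ℝ :=
  ∏ i, dirKer m (ξ i)

/-- The ℓ∞ torus distance on `𝕋^d = ℝ^d/ℤ^d` in terms of representatives: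
`|x - y|_∞ = min_{n ∈ ℤ^d} max_i |x_i - y_i + n_i|`. -/
def torusDistInf {d : ℕ} (x y : EuclideanSpace ℝ (Fin d)) : ℝ :=
  ⨅ n : Fin d → ℤ, ⨆ i, |x i - y i + (n i : ℝ)|

open Finset

def dirKerDeriv (m : ℕ) (t : ℝ) : ℝ :=
  (2 * m + 1 : ℝ)⁻¹ * ∑ k ∈ Icc (-(m : ℤ)) m, -Real.sin (2 * π * k * t) * (2 * π * k)

lemma hasDerivAt_dirKer (m : ℕ) (t : ℝ) : HasDerivAt (dirKer m) (dirKerDeriv m t) t := by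
  refine HasDerivAt.const_mul _ (HasDerivAt.fun_sum fun k _ => ?_)
  simpa using ((hasDerivAt_id t).const_mul (2 * π * (k : ℝ))).cos

lemma Icc_neg_natCast_succ (n : ℕ) :
    Icc (-((n + 1 : ℕ) : ℤ)) (n + 1 : ℕ)
      = insert (-(n + 1 : ℤ)) (insert (n + 1 : ℤ) (Icc (-(n : ℤ)) n)) := by
  ext k
  simp only [mem_Icc, mem_insert]
  omega

lemma sin_mul_sum_Icc_cos (m : ℕ) (t : ℝ) :
    Real.sin (π * t) * ∑ k ∈ Icc (-(m : ℤ)) m, Real.cos (2 * π * k * t)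
      = Real.sin ((2 * m + 1) * (π * t)) := by
  induction m with
  | zero => simp
  | succ n ih =>
    rw [Icc_neg_natCast_succ, sum_insert (by simp only [mem_insert, mem_Icc]; omega),
      sum_insert (by simp only [mem_Icc]; omega), mul_add, mul_add, ih]
    push_cast
    -- `sin ((2n+3) a) = sin ((2n+1) a) + 2 sin a cos ((2n+2) a)`, with `a = π t`
    have e₁ : 2 * π * -((n : ℝ) + 1) * t = -((2 * n + 2) * (π * t)) := by ring
    have e₂ : 2 * π * ((n : ℝ) + 1) * t = (2 * n + 2) * (π * t) := by ring
    have e₃ : (2 * ((n : ℝ) + 1) + 1) * (π * t) = (2 * n + 2) * (π * t) + π * t := by ring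
    have e₄ : (2 * (n : ℝ) + 1) * (π * t) = (2 * n + 2) * (π * t) - π * t := by ring
    rw [e₁, e₂, e₃, e₄, Real.cos_neg, Real.sin_add, Real.sin_sub]
    ring

lemma sin_mul_dirKer (m : ℕ) (t : ℝ) :
    Real.sin (π * t) * dirKer m t
      = (2 * m + 1 : ℝ)⁻¹ * Real.sin ((2 * m + 1) * (π * t)) := by
  rw [dirKer, ← sin_mul_sum_Icc_cos]
  ring

lemma sin_mul_dirKerDeriv (m : ℕ) (t : ℝ) :
    Real.sin (π * t) * dirKerDeriv m t
      = π * Real.cos ((2 * m + 1) * (π * t)) - π * Real.cos (π * t) * dirKer m t := by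
  have hm : (2 * m + 1 : ℝ) ≠ 0 := by positivity
  have hlin : ∀ c : ℝ, HasDerivAt (fun s : ℝ => c * (π * s)) (c * π) t := fun c => by
    simpa [mul_assoc] using (hasDerivAt_id t).const_mul (c * π)
  have hlhs := (((hlin 1).sin).mul (hasDerivAt_dirKer m t))
  have hrhs := ((hlin (2 * m + 1)).sin).const_mul (2 * m + 1 : ℝ)⁻¹
  simp only [one_mul] at hlhs
  have := hlhs.unique (hrhs.congr_of_eventuallyEq (.of_forall fun s => sin_mul_dirKer m s))
  field_simp at this
  rw [show π * t * (2 * m + 1) = (2 * m + 1) * (π * t) by ring] at this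
  linear_combination this

lemma abs_inv_mul_sum_le {m : ℕ} {g : ℤ → ℝ} {B : ℝ}
    (h : ∀ k ∈ Icc (-(m : ℤ)) m, |g k| ≤ B) :
    |(2 * m + 1 : ℝ)⁻¹ * ∑ k ∈ Icc (-(m : ℤ)) m, g k| ≤ B := by
  have hcard : ((Icc (-(m : ℤ)) m).card : ℝ) = 2 * m + 1 := by
    rw [show (Icc (-(m : ℤ)) m).card = 2 * m + 1 by rw [Int.card_Icc]; omega]
    push_cast; ring
  have hpos : (0 : ℝ) < 2 * m + 1 := by positivity
  rw [abs_mul, abs_inv, abs_of_pos hpos, inv_mul_le_iff₀ hpos, ← hcard, ← nsmul_eq_mul]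
  exact (abs_sum_le_sum_abs _ _).trans (sum_le_card_nsmul _ _ _ h)

lemma abs_dirKer_le_one (m : ℕ) (t : ℝ) : |dirKer m t| ≤ 1 :=
  abs_inv_mul_sum_le fun _ _ => Real.abs_cos_le_one _

lemma abs_dirKerDeriv_le (m : ℕ) (t : ℝ) : |dirKerDeriv m t| ≤ 2 * π * m := by
  refine abs_inv_mul_sum_le fun k hk => ?_
  have hk : |(k : ℝ)| ≤ m := by rw [mem_Icc] at hk; exact_mod_cast abs_le.mpr hk
  rw [abs_mul, abs_neg, abs_mul, abs_of_pos (by positivity : (0 : ℝ) < 2 * π)]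
  calc |Real.sin (2 * π * k * t)| * (2 * π * |(k : ℝ)|) ≤ 1 * (2 * π * m) := by
        gcongr
        · exact Real.abs_sin_le_one _
    _ = 2 * π * m := one_mul _

lemma abs_sin_mul_dirKer_le (m : ℕ) (t : ℝ) :
    (2 * m + 1) * |Real.sin (π * t) * dirKer m t| ≤ 1 := by
  have hpos : (0 : ℝ) < 2 * m + 1 := by positivity
  rw [sin_mul_dirKer, abs_mul, abs_inv, ← mul_assoc, abs_of_pos hpos, mul_inv_cancel₀ hpos.ne',
    one_mul]
  exact Real.abs_sin_le_one _

lemma abs_sin_mul_dirKerDeriv_le (m : ℕ) (t : ℝ) :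
    |Real.sin (π * t) * dirKerDeriv m t| ≤ 2 * π := by
  rw [sin_mul_dirKerDeriv]
  have h₁ := Real.abs_cos_le_one ((2 * m + 1) * (π * t))
  have h₂ : |Real.cos (π * t) * dirKer m t| ≤ 1 := by
    rw [abs_mul]; exact mul_le_one₀ (Real.abs_cos_le_one _) (abs_nonneg _) (abs_dirKer_le_one m t)
  have := abs_sub (π * Real.cos ((2 * m + 1) * (π * t))) (π * (Real.cos (π * t) * dirKer m t))
  rw [abs_mul, abs_mul, abs_of_pos Real.pi_pos] at this
  rw [mul_assoc π (Real.cos (π * t))]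
  nlinarith [Real.pi_pos]

section Round

variable {α : Type*} [Field α] [LinearOrder α] [IsStrictOrderedRing α] [FloorRing α]

lemma abs_round_le_two_mul_abs (y : α) : |(round y : α)| ≤ 2 * |y| := by
  by_cases hy : |y| < 1 / 2
  · rw [round_eq_zero_iff.mpr (by rw [abs_lt] at hy; constructor <;> linarith), Int.cast_zero,
      abs_zero]
    positivity
  · have := abs_sub_round y
    have := abs_sub_abs_le_abs_sub (round y : α) y
    rw [abs_sub_comm] at this
    linarith

lemma abs_sub_lt_one_of_round_eq {u v : α} (h : round u = round v) : |u - v| < 1 := by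
  have hu := (round_eq_iff.mp rfl : u ∈ Set.Ico _ _)
  have hv := (round_eq_iff.mp h.symm : v ∈ Set.Ico _ _)
  rw [abs_sub_lt_iff]
  constructor <;> linarith [hu.1, hu.2, hv.1, hv.2]

end Round

lemma two_mul_abs_sub_round_le_abs_sin (t : ℝ) : 2 * |t - round t| ≤ |Real.sin (π * t)| := by
  have hsin : |Real.sin (π * (t - round t))| = |Real.sin (π * t)| := by
    rw [mul_sub, mul_comm π (round t : ℝ), Real.sin_sub_int_mul_pi, abs_mul, abs_neg_one_zpow,
      one_mul]
  have hle : |π * (t - round t)| ≤ π / 2 := by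
    rw [abs_mul, abs_of_pos Real.pi_pos]
    nlinarith [abs_sub_round t, Real.pi_pos]
  have := Real.mul_abs_le_abs_sin hle
  rwa [hsin, abs_mul, abs_of_pos Real.pi_pos, ← mul_assoc,
    div_mul_cancel₀ _ Real.pi_ne_zero] at this

/-- Index of the cell of side `δ` containing the representative `t - round t ∈ [-1/2, 1/2]`
of `t` modulo `1`. -/
def cellIndex (δ t : ℝ) : ℤ := round ((t - round t) / δ)

@[simp]
lemma cellIndex_zero (δ : ℝ) : cellIndex δ 0 = 0 := by simp [cellIndex]

lemma mul_abs_cellIndex_le_abs_sin {δ : ℝ} (hδ : 0 < δ) (t : ℝ) :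
    δ * |(cellIndex δ t : ℝ)| ≤ |Real.sin (π * t)| := by
  calc δ * |(cellIndex δ t : ℝ)| ≤ δ * (2 * |(t - round t) / δ|) :=
        mul_le_mul_of_nonneg_left (abs_round_le_two_mul_abs _) hδ.le
    _ = 2 * |t - round t| := by rw [abs_div, abs_of_pos hδ]; field_simp
    _ ≤ |Real.sin (π * t)| := two_mul_abs_sub_round_le_abs_sin t

lemma abs_sub_add_round_sub_round_lt {δ s t : ℝ} (hδ : 0 < δ)
    (h : cellIndex δ s = cellIndex δ t) : |s - t + ((round t - round s : ℤ) : ℝ)| < δ := by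
  have := abs_sub_lt_one_of_round_eq h
  rw [← sub_div, abs_div, abs_of_pos hδ, div_lt_one hδ] at this
  rwa [Int.cast_sub, show s - t + (round t - round s : ℝ) = s - round s - (t - round t) by ring]

lemma hasSum_one_div_int_sq : HasSum (fun j : ℤ => 1 / (j : ℝ) ^ 2) (π ^ 2 / 3) := by
  have h := HasSum.of_nat_of_neg (f := fun j : ℤ => 1 / (j : ℝ) ^ 2)
    (by simpa using hasSum_zeta_two) (by simpa using hasSum_zeta_two)
  rwa [show π ^ 2 / 6 + π ^ 2 / 6 - 1 / ((0 : ℤ) : ℝ) ^ 2 = π ^ 2 / 3 by simp; ring] at h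

def cellWeight (L : ℝ) (j : ℤ) : ℝ := if j = 0 then 1 else ((L * j)⁻¹) ^ 2

lemma cellWeight_nonneg (L : ℝ) (j : ℤ) : 0 ≤ cellWeight L j := by
  unfold cellWeight; split_ifs <;> positivity

@[simp]
lemma cellWeight_zero (L : ℝ) : cellWeight L 0 = 1 := if_pos rfl

lemma hasSum_cellWeight (L : ℝ) : HasSum (cellWeight L) (1 + π ^ 2 / (3 * L ^ 2)) := by
  have h := (hasSum_ite_eq (0 : ℤ) (1 : ℝ)).add (hasSum_one_div_int_sq.mul_left (L⁻¹ ^ 2))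
  convert h using 1
  · ext j
    by_cases hj : j = 0 <;> simp [cellWeight, hj, mul_pow, mul_comm]
  · field_simp

lemma sq_le_cellWeight {L x : ℝ} {j : ℤ} (hL : L ≠ 0) (h₀ : |x| ≤ 1)
    (h : |L * j * x| ≤ 1) : x ^ 2 ≤ cellWeight L j := by
  unfold cellWeight
  split_ifs with hj
  · simpa [sq_le_one_iff_abs_le_one] using h₀
  · rw [← sq_abs x, ← sq_abs (L * j)⁻¹]
    refine pow_le_pow_left₀ (abs_nonneg x) ?_ 2
    have hLj : 0 < |L * j| := abs_pos.mpr (mul_ne_zero hL (Int.cast_ne_zero.mpr hj))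
    rwa [abs_inv, ← one_div, le_div_iff₀ hLj, mul_comm, ← abs_mul]

lemma dirKer_sq_le_cellWeight (m : ℕ) {δ : ℝ} (hδ : 0 < δ) (t : ℝ) :
    dirKer m t ^ 2 ≤ cellWeight ((2 * m + 1) * δ) (cellIndex δ t) := by
  refine sq_le_cellWeight (by positivity) (abs_dirKer_le_one m t) ?_
  calc |(2 * m + 1) * δ * cellIndex δ t * dirKer m t|
      = (2 * m + 1) * (δ * |(cellIndex δ t : ℝ)|) * |dirKer m t| := by
        rw [abs_mul, abs_mul, abs_mul, abs_of_pos hδ,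
          abs_of_pos (by positivity : (0 : ℝ) < 2 * m + 1)]
        ring
    _ ≤ (2 * m + 1) * |Real.sin (π * t)| * |dirKer m t| := by
        gcongr
        exact mul_abs_cellIndex_le_abs_sin hδ t
    _ = (2 * m + 1) * |Real.sin (π * t) * dirKer m t| := by rw [abs_mul, mul_assoc]
    _ ≤ 1 := abs_sin_mul_dirKer_le m t

lemma dirKerDeriv_sq_le_cellWeight (m : ℕ) {δ : ℝ} (hδ : 0 < δ) (t : ℝ) :
    dirKerDeriv m t ^ 2
      ≤ (2 * π * (2 * m + 1)) ^ 2 * cellWeight ((2 * m + 1) * δ) (cellIndex δ t) := by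
  have hC : (0 : ℝ) < 2 * π * (2 * m + 1) := by positivity
  have key : (dirKerDeriv m t / (2 * π * (2 * m + 1))) ^ 2
      ≤ cellWeight ((2 * m + 1) * δ) (cellIndex δ t) := by
    refine sq_le_cellWeight (by positivity) ?_ ?_
    · rw [abs_div, abs_of_pos hC, div_le_one hC]
      linarith [abs_dirKerDeriv_le m t, Real.pi_pos]
    · calc |(2 * m + 1) * δ * cellIndex δ t * (dirKerDeriv m t / (2 * π * (2 * m + 1)))|
          = δ * |(cellIndex δ t : ℝ)| * |dirKerDeriv m t| / (2 * π) := by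
            rw [abs_mul, abs_mul, abs_mul, abs_div, abs_of_pos hδ, abs_of_pos hC,
              abs_of_pos (by positivity : (0 : ℝ) < 2 * m + 1)]
            field_simp
        _ ≤ |Real.sin (π * t) * dirKerDeriv m t| / (2 * π) := by
            rw [abs_mul]
            gcongr
            exact mul_abs_cellIndex_le_abs_sin hδ t
        _ ≤ 1 := by
            rw [div_le_one (by positivity)]
            exact abs_sin_mul_dirKerDeriv_le m t
  rwa [div_pow, div_le_iff₀ (by positivity), mul_comm] at key

lemma sqDirKer_sq_le (d m : ℕ) {δ : ℝ} (hδ : 0 < δ) (γ : EuclideanSpace ℝ (Fin d)) :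
    sqDirKer d m γ ^ 2 ≤ ∏ i, cellWeight ((2 * m + 1) * δ) (cellIndex δ (γ i)) := by
  rw [sqDirKer, ← prod_pow]
  exact prod_le_prod (fun _ _ => sq_nonneg _) fun i _ => dirKer_sq_le_cellWeight m hδ (γ i)

lemma gradient_sqDirKer_apply (d m : ℕ) (γ : EuclideanSpace ℝ (Fin d)) (i : Fin d) :
    gradient (sqDirKer d m) γ i
      = (∏ j ∈ univ.erase i, dirKer m (γ j)) * dirKerDeriv m (γ i) := by
  classical
  have hcoord : ∀ j : Fin d, HasFDerivAt (fun ξ : EuclideanSpace ℝ (Fin d) => dirKer m (ξ j))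
      (dirKerDeriv m (γ j) • EuclideanSpace.proj (𝕜 := ℝ) j) γ := fun j => by
    -- stated without the expected type, against which the unifier would unfold `dirKer`
    have h := (hasDerivAt_dirKer m (γ j)).comp_hasFDerivAt γ
      (EuclideanSpace.proj (𝕜 := ℝ) j).hasFDerivAt
    exact h
  have hD : HasFDerivAt (sqDirKer d m) (∑ j, (∏ k ∈ univ.erase j, dirKer m (γ k)) •
      dirKerDeriv m (γ j) • EuclideanSpace.proj (𝕜 := ℝ) j) γ :=
    HasFDerivAt.finsetProd fun j _ => hcoord j
  have hcoe : gradient (sqDirKer d m) γ i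
      = fderiv ℝ (sqDirKer d m) γ (EuclideanSpace.single i 1) := by
    rw [← toDual_gradient, InnerProductSpace.toDual_apply_apply,
      EuclideanSpace.inner_single_right]
    simp
  rw [hcoe, hD.fderiv]
  simp

lemma norm_gradient_sqDirKer_sq_le (d m : ℕ) {δ : ℝ} (hδ : 0 < δ)
    (γ : EuclideanSpace ℝ (Fin d)) :
    ‖gradient (sqDirKer d m) γ‖ ^ 2 ≤ d * (2 * π * (2 * m + 1)) ^ 2
      * ∏ i, cellWeight ((2 * m + 1) * δ) (cellIndex δ (γ i)) := by
  set w := fun i => cellWeight ((2 * m + 1) * δ) (cellIndex δ (γ i))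
  have hterm : ∀ i, ‖gradient (sqDirKer d m) γ i‖ ^ 2
      ≤ (2 * π * (2 * m + 1)) ^ 2 * ∏ j, w j := by
    intro i
    rw [gradient_sqDirKer_apply, Real.norm_eq_abs, sq_abs, mul_pow, ← prod_pow,
      ← mul_prod_erase univ w (mem_univ i)]
    calc (∏ j ∈ univ.erase i, dirKer m (γ j) ^ 2) * dirKerDeriv m (γ i) ^ 2
        ≤ (∏ j ∈ univ.erase i, w j) * ((2 * π * (2 * m + 1)) ^ 2 * w i) := by
          gcongr with j
          · exact prod_nonneg fun j _ => cellWeight_nonneg _ _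
          · exact dirKer_sq_le_cellWeight m hδ (γ j)
          · exact dirKerDeriv_sq_le_cellWeight m hδ (γ i)
      _ = (2 * π * (2 * m + 1)) ^ 2 * (w i * ∏ j ∈ univ.erase i, w j) := by ring
  rw [EuclideanSpace.norm_sq_eq]
  calc ∑ i, ‖gradient (sqDirKer d m) γ i‖ ^ 2
      ≤ ∑ _i : Fin d, (2 * π * (2 * m + 1)) ^ 2 * ∏ j, w j := sum_le_sum fun i _ => hterm i
    _ = _ := by simp [mul_assoc]

lemma sum_prod_le_pow_sub_one {ι α : Type*} [Fintype ι] [DecidableEq ι] [Zero α]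
    [DecidableEq α] {w : α → ℝ} {B : ℝ} (hw : HasSum w B) (hw₀ : 0 ≤ w) (hw0 : w 0 = 1)
    (K : Finset (ι → α)) (hK : 0 ∉ K) :
    ∑ k ∈ K, ∏ i, w (k i) ≤ B ^ Fintype.card ι - 1 := by
  set s : Finset α := insert 0 (K.biUnion fun k => univ.image k)
  have hKs : K ⊆ (Fintype.piFinset fun _ : ι => s).erase 0 := by
    intro k hk
    refine mem_erase.mpr ⟨fun h => hK (h ▸ hk), Fintype.mem_piFinset.mpr fun i => ?_⟩
    exact mem_insert_of_mem (mem_biUnion.mpr ⟨k, hk, mem_image_of_mem k (mem_univ i)⟩)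
  have h0 : (0 : ι → α) ∈ Fintype.piFinset fun _ : ι => s :=
    Fintype.mem_piFinset.mpr fun _ => mem_insert_self 0 _
  have hsum : ∑ j ∈ s, w j ≤ B := sum_le_hasSum s (fun j _ => hw₀ j) hw
  calc ∑ k ∈ K, ∏ i, w (k i)
      ≤ ∑ k ∈ (Fintype.piFinset fun _ : ι => s).erase 0, ∏ i, w (k i) :=
        sum_le_sum_of_subset_of_nonneg hKs fun k _ _ => prod_nonneg fun i _ => hw₀ _
    _ = (∑ j ∈ s, w j) ^ Fintype.card ι - 1 := by
        rw [sum_erase_eq_sub h0, ← prod_univ_sum, prod_const, card_univ]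
        simp [hw0]
    _ ≤ B ^ Fintype.card ι - 1 := by
        gcongr
        exact sum_nonneg fun j _ => hw₀ j

lemma one_add_pow_le_one_add_two_mul {ε : ℝ} {n : ℕ} (hε : 0 ≤ ε) (h : n * ε ≤ 1) :
    (1 + ε) ^ n ≤ 1 + 2 * (n * ε) := by
  calc (1 + ε) ^ n ≤ Real.exp ε ^ n := by
        gcongr
        linarith [Real.add_one_le_exp ε]
    _ = Real.exp (n * ε) := (Real.exp_nat_mul ε n).symm
    _ ≤ 1 + 2 * (n * ε) := by
        have hnε : 0 ≤ (n : ℝ) * ε := by positivity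
        have := Real.abs_exp_sub_one_le (x := n * ε) (by rwa [abs_of_nonneg hnε])
        rw [abs_of_nonneg hnε] at this
        linarith [le_abs_self (Real.exp (n * ε) - 1)]

lemma torusDistInf_le {d : ℕ} (x y : EuclideanSpace ℝ (Fin d)) (n : Fin d → ℤ) :
    torusDistInf x y ≤ ⨆ i, |x i - y i + (n i : ℝ)| :=
  ciInf_le ⟨0, by rintro r ⟨n', rfl⟩; exact Real.iSup_nonneg fun i => abs_nonneg _⟩ n

lemma torusDistInf_lt_of_cellIndex_eq {d : ℕ} {δ : ℝ} (hδ : 0 < δ)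
    {x y : EuclideanSpace ℝ (Fin d)} (h : ∀ i, cellIndex δ (x i) = cellIndex δ (y i)) :
    torusDistInf x y < δ := by
  refine (torusDistInf_le x y fun i => round (y i) - round (x i)).trans_lt ?_
  cases isEmpty_or_nonempty (Fin d)
  · rwa [Real.iSup_of_isEmpty]
  · obtain ⟨i₀, hi₀⟩ :=
      Finite.exists_max fun i => |x i - y i + ((round (y i) - round (x i) : ℤ) : ℝ)|
    exact (ciSup_le hi₀).trans_lt (abs_sub_add_round_sub_round_lt hδ (h i₀))

/-- The points of `Γ` lie in distinct cells of `ℤ^d`, none of them the central one. -/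
lemma sum_prod_cellWeight_le {d : ℕ} {δ : ℝ} (hδ : 0 < δ) (L : ℝ)
    (Γ : Finset (EuclideanSpace ℝ (Fin d)))
    (hsep : ∀ γ ∈ Γ, ∀ γ' ∈ Γ, γ ≠ γ' → δ ≤ torusDistInf γ γ')
    (hfar : ∀ γ ∈ Γ, δ ≤ torusDistInf γ 0) :
    ∑ γ ∈ Γ, ∏ i, cellWeight L (cellIndex δ (γ i))
      ≤ (1 + π ^ 2 / (3 * L ^ 2)) ^ d - 1 := by
  classical
  set cell : EuclideanSpace ℝ (Fin d) → Fin d → ℤ := fun γ i => cellIndex δ (γ i)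
  have hinj : Set.InjOn cell Γ := fun γ hγ γ' hγ' h => by
    by_contra hne
    exact (hsep γ hγ γ' hγ' hne).not_gt
      (torusDistInf_lt_of_cellIndex_eq hδ fun i => congrFun h i)
  have hzero : 0 ∉ Γ.image cell := by
    simp only [mem_image, not_exists, not_and]
    intro γ hγ h
    exact (hfar γ hγ).not_gt (torusDistInf_lt_of_cellIndex_eq hδ fun i => by
      simpa using congrFun h i)
  have := sum_prod_le_pow_sub_one (hasSum_cellWeight L) (cellWeight_nonneg L) (cellWeight_zero L)
    _ hzero
  rwa [sum_image hinj, Fintype.card_fin] at this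

lemma sum_sqDirKer_sq_le {d : ℕ} (m : ℕ) {δ : ℝ} (hδ : 0 < δ)
    (Γ : Finset (EuclideanSpace ℝ (Fin d)))
    (hsep : ∀ γ ∈ Γ, ∀ γ' ∈ Γ, γ ≠ γ' → δ ≤ torusDistInf γ γ')
    (hfar : ∀ γ ∈ Γ, δ ≤ torusDistInf γ 0) :
    ∑ γ ∈ Γ, sqDirKer d m γ ^ 2 ≤ (1 + π ^ 2 / (3 * ((2 * m + 1) * δ) ^ 2)) ^ d - 1 :=
  (sum_le_sum fun γ _ => sqDirKer_sq_le d m hδ γ).trans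
    (sum_prod_cellWeight_le hδ _ Γ hsep hfar)

lemma sum_norm_gradient_sqDirKer_sq_le {d : ℕ} (m : ℕ) {δ : ℝ} (hδ : 0 < δ)
    (Γ : Finset (EuclideanSpace ℝ (Fin d)))
    (hsep : ∀ γ ∈ Γ, ∀ γ' ∈ Γ, γ ≠ γ' → δ ≤ torusDistInf γ γ')
    (hfar : ∀ γ ∈ Γ, δ ≤ torusDistInf γ 0) :
    ∑ γ ∈ Γ, ‖gradient (sqDirKer d m) γ‖ ^ 2
      ≤ d * (2 * π * (2 * m + 1)) ^ 2
        * ((1 + π ^ 2 / (3 * ((2 * m + 1) * δ) ^ 2)) ^ d - 1) := by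
  refine (sum_le_sum fun γ _ => norm_gradient_sqDirKer_sq_le d m hδ γ).trans ?_
  rw [← mul_sum]
  gcongr
  exact sum_prod_cellWeight_le hδ _ Γ hsep hfar

/-- **Energy bounds for ℓ∞-separated sets avoiding the origin on the torus.**
If `Δ_∞(Γ) ≥ β/m` and no point of `Γ` has ℓ∞ torus norm `< β/m`, then
`∑_{γ∈Γ} |D_m(γ)|² ≤ 4π²d/β²` and `∑_{γ∈Γ} |∇D_m(γ)|² ≤ 16π⁴d²m²/β²`. -/
theorem stmt10 (m : ℕ) (hm : 1 ≤ m) (d : ℕ) (hd : 2 ≤ d)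
    (β : ℝ) (hβ : 2 * Real.pi * Real.sqrt d ≤ β)
    (Γ : Finset (EuclideanSpace ℝ (Fin d)))
    (hsep : ∀ γ ∈ Γ, ∀ γ' ∈ Γ, γ ≠ γ' → β / m ≤ torusDistInf γ γ')
    (hfar : ∀ γ ∈ Γ, β / m ≤ torusDistInf γ 0) :
    ∑ γ ∈ Γ, sqDirKer d m γ ^ 2 ≤ 4 * Real.pi ^ 2 * (d : ℝ) / β ^ 2 ∧
    ∑ γ ∈ Γ, ‖gradient (sqDirKer d m) γ‖ ^ 2
        ≤ 16 * Real.pi ^ 4 * (d : ℝ) ^ 2 * (m : ℝ) ^ 2 / β ^ 2 := by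
  have hm₀ : (0 : ℝ) < m := by exact_mod_cast hm
  have hβ₀ : 0 < β := lt_of_lt_of_le (by positivity) hβ
  have hβsq : 4 * π ^ 2 * d ≤ β ^ 2 := by
    have := pow_le_pow_left₀ (by positivity) hβ 2
    rw [mul_pow, Real.sq_sqrt (by positivity), mul_pow] at this
    linarith
  have hδ : 0 < β / m := by positivity
  set ε := π ^ 2 / (3 * ((2 * m + 1) * (β / m)) ^ 2)
  have hε : ε ≤ π ^ 2 / (3 * β ^ 2) := by
    have : β ≤ (2 * m + 1) * (β / m) := by
      rw [mul_div_assoc', le_div_iff₀ hm₀]; nlinarith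
    simp only [ε]; gcongr
  have hpow : (1 + ε) ^ d - 1 ≤ 2 * (d * ε) := by
    have hdε : d * ε ≤ 1 := by
      calc d * ε ≤ d * (π ^ 2 / (3 * β ^ 2)) := by gcongr
        _ ≤ 1 := by rw [mul_div_assoc', div_le_one (by positivity)]; nlinarith [Real.pi_pos]
    linarith [one_add_pow_le_one_add_two_mul (by positivity) hdε]
  constructor
  · calc ∑ γ ∈ Γ, sqDirKer d m γ ^ 2 ≤ 2 * (d * ε) :=
          (sum_sqDirKer_sq_le m hδ Γ hsep hfar).trans hpow
      _ ≤ 2 * (d * (π ^ 2 / (3 * β ^ 2))) := by gcongr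
      _ ≤ 4 * π ^ 2 * d / β ^ 2 := by
          rw [mul_div_assoc', mul_div_assoc', div_le_div_iff₀ (by positivity) (by positivity)]
          nlinarith [(by positivity : 0 < π ^ 2 * d * β ^ 2)]
  · calc ∑ γ ∈ Γ, ‖gradient (sqDirKer d m) γ‖ ^ 2
        ≤ d * (2 * π * (2 * m + 1)) ^ 2 * (2 * (d * ε)) :=
          (sum_norm_gradient_sqDirKer_sq_le m hδ Γ hsep hfar).trans (by gcongr)
      _ = 8 * π ^ 4 * d ^ 2 * m ^ 2 / (3 * β ^ 2) := by simp only [ε]; field_simp; ring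
      _ ≤ 16 * π ^ 4 * d ^ 2 * m ^ 2 / β ^ 2 := by
          rw [div_le_div_iff₀ (by positivity) (by positivity)]
          nlinarith [(by positivity : 0 < π ^ 4 * d ^ 2 * m ^ 2 * β ^ 2)]
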